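/- For every finite connected simple graph G, the strong prism satisfies μ(G ⊠ P_2) ≥ max{n(G), 2μ(G)}; in particular, for either vertex p of P_2 the set V(G) × {p} is a mutual-visibility set of G ⊠ P_2. -/

import Mathlib

open SimpleGraph

/-- Vertices `x` and `y` are `X`-visible in `G`: some shortest `x,y`-path has
no internal vertex in `X`. -/
def Visible {V : Type*} (G : SimpleGraph V) (X : Set V) (x y : V) : Prop :=
  ∃ p : G.Walk x y, p.length = G.dist x y ∧ ∀ v ∈ p.support, v ∈ X → v = x ∨ v = y

/-- `X` is a mutual-visibility set of `G`: every two vertices of `X` are `X`-visible. -/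
def IsMVSet {V : Type*} (G : SimpleGraph V) (X : Set V) : Prop :=
  ∀ x ∈ X, ∀ y ∈ X, Visible G X x y

/-- `X` is a total mutual-visibility set of `G`: every two vertices of `G` are
`X`-visible. -/
def IsTMVSet {V : Type*} (G : SimpleGraph V) (X : Set V) : Prop :=
  ∀ x y : V, Visible G X x y

/-- The mutual-visibility number of `G`: the maximum cardinality of a
mutual-visibility set. -/
noncomputable def mu {V : Type*} (G : SimpleGraph V) : ℕ :=
  sSup {n | ∃ X : Set V, IsMVSet G X ∧ X.ncard = n}

/-- The total mutual-visibility number of `G`: the maximum cardinality of a total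
mutual-visibility set. -/
noncomputable def muT {V : Type*} (G : SimpleGraph V) : ℕ :=
  sSup {n | ∃ X : Set V, IsTMVSet G X ∧ X.ncard = n}

/-- A feasible total mutual-visibility set: a total mutual-visibility set `S` such that
any two adjacent vertices of `S` have a common neighbor outside `S`. -/
def IsFeasibleTMVSet {V : Type*} (G : SimpleGraph V) (S : Set V) : Prop :=
  IsTMVSet G S ∧ ∀ x ∈ S, ∀ y ∈ S, G.Adj x y → ∃ z ∉ S, G.Adj x z ∧ G.Adj y z

/-- The strong product of two simple graphs. -/
def strongProd {α β : Type*} (G : SimpleGraph α) (H : SimpleGraph β) :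
    SimpleGraph (α × β) where
  Adj x y := (G.Adj x.1 y.1 ∧ x.2 = y.2) ∨ (x.1 = y.1 ∧ H.Adj x.2 y.2) ∨
    (G.Adj x.1 y.1 ∧ H.Adj x.2 y.2)
  symm := by
    constructor
    rintro ⟨a, b⟩ ⟨c, d⟩ (⟨h1, h2⟩ | ⟨h1, h2⟩ | ⟨h1, h2⟩)
    · exact Or.inl ⟨h1.symm, h2.symm⟩
    · exact Or.inr (Or.inl ⟨h1.symm, h2.symm⟩)
    · exact Or.inr (Or.inr ⟨h1.symm, h2.symm⟩)
  loopless := by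
    constructor
    rintro ⟨a, b⟩ (⟨h, _⟩ | ⟨_, h⟩ | ⟨h, _⟩)
    · exact G.irrefl h
    · exact H.irrefl h
    · exact G.irrefl h

/-- The iterated (associative) strong product of a finite family of graphs:
two tuples are adjacent iff they are distinct and agree or are adjacent in every
coordinate. -/
def strongProdPi {k : ℕ} {V : Fin k → Type*} (G : ∀ i, SimpleGraph (V i)) :
    SimpleGraph (∀ i, V i) where
  Adj x y := x ≠ y ∧ ∀ i, x i = y i ∨ (G i).Adj (x i) (y i)
  symm := by
    constructor
    rintro x y ⟨hne, h⟩
    exact ⟨hne.symm, fun i => (h i).imp Eq.symm fun hh => (G i).adj_symm hh⟩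
  loopless := ⟨fun x h => h.1 rfl⟩

/-- A universal vertex: adjacent to all other vertices. -/
def IsUniversal {V : Type*} (G : SimpleGraph V) (v : V) : Prop :=
  ∀ u : V, u ≠ v → G.Adj v u

/-- A cut vertex: its removal disconnects the graph. -/
def IsCutVertex {V : Type*} (G : SimpleGraph V) (v : V) : Prop :=
  ¬ (G.induce ({v}ᶜ : Set V)).Preconnected

/-- An induced path: a path with no chords between its vertices. -/
def IsInducedPath {V : Type*} (G : SimpleGraph V) {u v : V} (p : G.Walk u v) : Prop :=
  p.IsPath ∧ ∀ a b : V, a ∈ p.support → b ∈ p.support → G.Adj a b → s(a, b) ∈ p.edges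

/-- A block graph: a connected graph in which every pair of vertices is joined
by a unique induced path. -/
def IsBlockGraph {V : Type*} (G : SimpleGraph V) : Prop :=
  G.Connected ∧ ∀ u v : V, ∃! p : G.Walk u v, IsInducedPath G p

/-- A convex set of vertices: every shortest path of `G` between two of its
vertices stays inside the set. -/
def IsConvexSet {V : Type*} (G : SimpleGraph V) (A : Set V) : Prop :=
  ∀ x ∈ A, ∀ y ∈ A, ∀ p : G.Walk x y, p.length = G.dist x y → ∀ v ∈ p.support, v ∈ A

/-- A cactus graph: a connected graph in which every edge lies in at most one cycle,
i.e. two cycles sharing an edge have the same edge set. -/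
def IsCactus {V : Type*} (G : SimpleGraph V) : Prop :=
  G.Connected ∧ ∀ (v : V) (p q : G.Walk v v), p.IsCycle → q.IsCycle →
    ∀ e, e ∈ p.edges → e ∈ q.edges → ∀ e', e' ∈ p.edges ↔ e' ∈ q.edges

/-- A cograph: obtained from a single vertex by repeatedly adding twins, i.e. there is
an enumeration of the vertices in which every vertex except the first is, at the
moment of its addition, a (true or false) twin of some earlier vertex in the induced
subgraph on the vertices added so far. -/
def IsCograph {V : Type*} (G : SimpleGraph V) : Prop :=
  ∃ l : List V, l.Nodup ∧ (∀ v : V, v ∈ l) ∧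
    ∀ i : Fin l.length, (i : ℕ) ≠ 0 →
      ∃ j : Fin l.length, (j : ℕ) < (i : ℕ) ∧
        ∀ z ∈ l.take ((i : ℕ) + 1), z ≠ l.get i → z ≠ l.get j →
          (G.Adj (l.get i) z ↔ G.Adj (l.get j) z)

/-- An enabling vertex: a vertex `v` adjacent to every vertex `u` of `G - v` whose
degree in `G - v` is less than `n(G) - 2`. -/
def IsEnabling {V : Type*} [Fintype V] (G : SimpleGraph V) (v : V) : Prop :=
  ∀ u : V, u ≠ v → (G.neighborSet u \ {v}).ncard < Fintype.card V - 2 → G.Adj v u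

/-
A shortest path of `G` stays shortest when lifted to `G ⊠ H` along any labelling
`x ↦ (x, f x)` whose labels are equal or adjacent along edges, since projecting a walk of
`G ⊠ H` to `G` never increases its length. With `H = K₂` every labelling is allowed: a
shortest `g,g'`-path is lifted with its interior on the other layer, which makes a layer a
mutual-visibility set, and a visibility path of `X` is lifted jumping to the target layer
after its first vertex, which makes `X × V(K₂)` one.
-/

theorem Visible.refl {V : Type*} (G : SimpleGraph V) (X : Set V) (x : V) : Visible G X x x :=
  ⟨.nil, by simp, by simp⟩

theorem Visible.of_adj {V : Type*} {G : SimpleGraph V} (X : Set V) {x y : V} (h : G.Adj x y) :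
    Visible G X x y :=
  ⟨.cons h .nil, by simp [dist_eq_one_iff_adj.2 h], by simp⟩

theorem exists_isMVSet_ncard_eq_mu {V : Type*} [Finite V] (G : SimpleGraph V) :
    ∃ X : Set V, IsMVSet G X ∧ X.ncard = mu G :=
  Nat.sSup_mem (s := {n | ∃ X : Set V, IsMVSet G X ∧ X.ncard = n}) ⟨0, ∅, by simp [IsMVSet]⟩
    ⟨Nat.card V, by rintro _ ⟨X, -, rfl⟩; exact X.ncard_le_card⟩

theorem ncard_le_mu_of_isMVSet {V : Type*} [Finite V] {G : SimpleGraph V} {X : Set V}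
    (hX : IsMVSet G X) : X.ncard ≤ mu G :=
  le_csSup ⟨Nat.card V, by rintro _ ⟨Y, -, rfl⟩; exact Y.ncard_le_card⟩ ⟨X, hX, rfl⟩

namespace strongProd

variable {α β : Type*} {G : SimpleGraph α} {H : SimpleGraph β}

theorem exists_walk_fst_length_le {u v : α × β} (p : (strongProd G H).Walk u v) :
    ∃ q : G.Walk u.1 v.1, q.length ≤ p.length := by
  induction p with
  | nil => exact ⟨.nil, le_rfl⟩
  | cons h _ ih =>
    obtain ⟨q, hq⟩ := ih
    rw [Walk.length_cons]
    rcases h with ⟨h, -⟩ | ⟨h, -⟩ | ⟨h, -⟩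
    · exact ⟨.cons h q, by rw [Walk.length_cons]; omega⟩
    · exact ⟨q.copy h.symm rfl, by rw [Walk.length_copy]; omega⟩
    · exact ⟨.cons h q, by rw [Walk.length_cons]; omega⟩

theorem dist_fst_le_dist (u v : α × β) (huv : (strongProd G H).Reachable u v) :
    G.dist u.1 v.1 ≤ (strongProd G H).dist u v := by
  obtain ⟨p, hp⟩ := huv.exists_walk_length_eq_dist
  obtain ⟨q, hq⟩ := exists_walk_fst_length_le p
  exact (dist_le q).trans (hq.trans hp.le)

def graphHom (f : α → β) (hf : ∀ ⦃x y⦄, G.Adj x y → f x = f y ∨ H.Adj (f x) (f y)) :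
    G →g strongProd G H where
  toFun x := (x, f x)
  map_rel' h := (hf h).elim (fun e => Or.inl ⟨h, e⟩) fun a => Or.inr (Or.inr ⟨h, a⟩)

theorem visible_graphHom (f : α → β)
    (hf : ∀ ⦃x y⦄, G.Adj x y → f x = f y ∨ H.Adj (f x) (f y)) (X : Set (α × β))
    {a b : α} (w : G.Walk a b) (hw : w.length = G.dist a b)
    (hX : ∀ x ∈ w.support, (x, f x) ∈ X → x = a ∨ x = b) :
    Visible (strongProd G H) X (a, f a) (b, f b) := by
  let w' : (strongProd G H).Walk (a, f a) (b, f b) := w.map (graphHom f hf)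
  have hlen : w'.length = w.length := w.length_map _
  refine ⟨w', le_antisymm ?_ (dist_le w'), ?_⟩
  · rw [hlen, hw]
    exact dist_fst_le_dist _ _ ⟨w'⟩
  · intro v hv hvX
    rw [show w'.support = w.support.map (graphHom f hf) from w.support_map _] at hv
    obtain ⟨x, hx, rfl⟩ := List.mem_map.1 hv
    rcases hX x hx hvX with rfl | rfl
    · exact Or.inl rfl
    · exact Or.inr rfl

theorem isMVSet_univ_prod_singleton (hG : G.Connected) {p q : β} (hpq : H.Adj p q) :
    IsMVSet (strongProd G H) (Set.univ ×ˢ {p}) := by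
  classical
  rintro ⟨g, i⟩ ⟨-, hi : i = p⟩ ⟨g', j⟩ ⟨-, hj : j = p⟩
  rw [hi, hj]
  obtain ⟨w, hw⟩ := hG.exists_walk_length_eq_dist g g'
  let f : α → β := fun x => if x = g ∨ x = g' then p else q
  have hf : ∀ ⦃x y⦄, G.Adj x y → f x = f y ∨ H.Adj (f x) (f y) := by
    intro x y _
    simp only [f]
    split_ifs <;> simp [hpq, hpq.symm]
  have hfg : f g = p := if_pos (Or.inl rfl)
  have hfg' : f g' = p := if_pos (Or.inr rfl)
  suffices hX : ∀ x ∈ w.support, (x, f x) ∈ Set.univ ×ˢ {p} → x = g ∨ x = g' by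
    simpa only [hfg, hfg'] using visible_graphHom f hf _ w hw hX
  intro x _ hx
  by_contra hne
  have hqp : q = p := (if_neg hne : f x = q) ▸ hx.2
  exact hpq.ne hqp.symm

theorem isMVSet_prod_univ_of_top {X : Set α} (hX : IsMVSet G X) :
    IsMVSet (strongProd G (⊤ : SimpleGraph β)) (X ×ˢ Set.univ) := by
  classical
  rintro ⟨a, i⟩ ⟨ha, -⟩ ⟨b, j⟩ ⟨hb, -⟩
  by_cases hab : a = b
  · subst hab
    by_cases hij : i = j
    · subst hij
      exact Visible.refl _ _ _
    · exact Visible.of_adj _ (Or.inr (Or.inl ⟨rfl, hij⟩))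
  obtain ⟨w, hw, hwX⟩ := hX a ha b hb
  let f : α → β := fun x => if x = a then i else j
  have hf : ∀ ⦃x y⦄, G.Adj x y → f x = f y ∨ (⊤ : SimpleGraph β).Adj (f x) (f y) :=
    fun _ _ _ => eq_or_ne _ _
  have hfa : f a = i := if_pos rfl
  have hfb : f b = j := if_neg (Ne.symm hab)
  simpa only [hfa, hfb] using visible_graphHom f hf _ w hw fun x hx hxX => hwX x hx hxX.1

end strongProd

theorem stmt_13 {V : Type*} [Fintype V] (G : SimpleGraph V) (hG : G.Connected) :
    max (Fintype.card V) (2 * mu G) ≤ mu (strongProd G (SimpleGraph.pathGraph 2)) ∧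
    ∀ p : Fin 2, IsMVSet (strongProd G (SimpleGraph.pathGraph 2))
      (Set.univ ×ˢ ({p} : Set (Fin 2))) := by
  rw [pathGraph_two_eq_top]
  have hlayer : ∀ p : Fin 2, IsMVSet (strongProd G ⊤) (Set.univ ×ˢ ({p} : Set (Fin 2))) :=
    fun p => (exists_ne p).elim fun _ hq =>
      strongProd.isMVSet_univ_prod_singleton hG ((top_adj _ _).2 hq.symm)
  obtain ⟨X, hX, hXcard⟩ := exists_isMVSet_ncard_eq_mu G
  refine ⟨max_le ?_ ?_, hlayer⟩
  · simpa [Set.ncard_prod] using ncard_le_mu_of_isMVSet (hlayer 0)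
  · simpa [Set.ncard_prod, hXcard, mul_comm] using
      ncard_le_mu_of_isMVSet (strongProd.isMVSet_prod_univ_of_top (β := Fin 2) hX)
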